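/- arXiv:0908.0786 — 4 statements merged into one kernel-verified Lean document; each statement's English description precedes it below -/
import Mathlib

section
/- Let A be a self-adjoint operator on an n-dimensional real inner product space with eigenvalues λ_1,…,λ_n and elementary symmetric functions S_r. If S_{r+1} = 0 and S_{r+2} = 0 for some 0 ≤ r ≤ n−2, then S_j = 0 for all j ≥ r+1; equivalently, at least n−r of the eigenvalues λ_i vanish. -/
/-!
The polynomial `p = ∏ (X - λᵢ)` has coefficient `(-1)ᵏ Sₖ` in degree `n - k`, so the hypotheses
say that two consecutive coefficients of a real-rooted polynomial vanish; we show that all lower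
coefficients then vanish, i.e. `X ^ (n - r) ∣ p`. Derivatives of real-rooted polynomials are
real-rooted (Rolle), so after differentiating it suffices to see that `p'(0) = p''(0) = 0` forces
`p(0) = 0`. For this consider `L(p) = p'(0)² - p(0) p''(0)` (`laguerreAtZero`): it satisfies
`L(f g) = f(0)² L(g) + g(0)² L(f)`, hence is nonnegative on real-rooted polynomials, and for
`p = (X - a) q` it equals `q(0)² + a² L(q)`, which vanishes only if `q(0) = 0`.
-/

open Polynomial

namespace Polynomial

section CommRing

variable {R : Type*} [CommRing R]

def laguerreAtZero (p : R[X]) : R := p.coeff 1 ^ 2 - 2 * p.coeff 0 * p.coeff 2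

theorem laguerreAtZero_mul (f g : R[X]) :
    laguerreAtZero (f * g) =
      f.coeff 0 ^ 2 * laguerreAtZero g + g.coeff 0 ^ 2 * laguerreAtZero f := by
  simp [laguerreAtZero, coeff_mul, Finset.Nat.antidiagonal_succ]
  ring

theorem laguerreAtZero_X_sub_C (a : R) : laguerreAtZero (X - C a) = 1 := by
  simp [laguerreAtZero, coeff_X, coeff_C]

variable [LinearOrder R] [IsStrictOrderedRing R]

theorem Splits.laguerreAtZero_nonneg {p : R[X]} (hp : p.Splits) : 0 ≤ laguerreAtZero p := by
  induction hp using Submonoid.closure_induction with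
  | mem f hf =>
    rcases hf with ⟨a, rfl⟩ | ⟨a, rfl⟩ <;> simp [laguerreAtZero, coeff_X, coeff_C]
  | one => simp [laguerreAtZero, coeff_one]
  | mul f g _ _ hf hg =>
    rw [laguerreAtZero_mul]
    positivity

theorem Splits.coeff_zero_eq_zero_of_coeff_one_of_coeff_two {p : R[X]} (hp : p.Splits)
    (hdeg : p.natDegree ≠ 0) (h1 : p.coeff 1 = 0) (h2 : p.coeff 2 = 0) : p.coeff 0 = 0 := by
  obtain ⟨a, ha⟩ := hp.exists_eval_eq_zero fun h => hdeg (natDegree_eq_of_degree_eq_some h)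
  set q := p /ₘ (X - C a)
  have hpq : (X - C a) * q = p := mul_divByMonic_eq_iff_isRoot.mpr ha
  have hq : q.Splits := splits_X_sub_C_mul_iff.mp (hpq ▸ hp)
  have hL : laguerreAtZero p = 0 := by simp [laguerreAtZero, h1, h2]
  rw [← hpq, laguerreAtZero_mul, laguerreAtZero_X_sub_C, mul_one] at hL
  have hq0 : q.coeff 0 = 0 := by
    nlinarith [hq.laguerreAtZero_nonneg, sq_nonneg (q.coeff 0), sq_nonneg ((X - C a).coeff 0)]
  rw [← hpq, mul_coeff_zero, hq0, mul_zero]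

end CommRing

theorem X_pow_succ_dvd_iff_derivative {R : Type*} [Semiring R] [NoZeroDivisors R] [CharZero R]
    {p : R[X]} {k : ℕ} : X ^ (k + 1) ∣ p ↔ p.coeff 0 = 0 ∧ X ^ k ∣ p.derivative := by
  simp only [X_pow_dvd_iff, coeff_derivative, mul_eq_zero, Nat.forall_lt_succ_left]
  norm_cast
  simp

theorem Splits.derivative {p : ℝ[X]} (hp : p.Splits) : p.derivative.Splits := by
  rw [splits_iff_card_roots] at hp ⊢
  have := card_roots_le_derivative p
  have := card_roots' p.derivative
  have := natDegree_derivative_le p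
  omega

theorem Splits.X_pow_dvd_of_coeff_eq_zero {t : ℕ} {p : ℝ[X]} (hp : p.Splits)
    (ht : t < p.natDegree) (h0 : p.coeff t = 0) (h1 : p.coeff (t + 1) = 0) :
    X ^ (t + 2) ∣ p := by
  induction t generalizing p with
  | zero =>
    rw [X_pow_dvd_iff]
    intro d hd
    interval_cases d <;> assumption
  | succ t ih =>
    have hdvd : X ^ (t + 2) ∣ p.derivative :=
      ih hp.derivative (by rw [natDegree_derivative]; omega)
        (by simp [coeff_derivative, h0]) (by simp [coeff_derivative, h1])
    have hlow : ∀ d < t + 2, p.coeff (d + 1) = 0 := by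
      simpa [coeff_derivative, Nat.cast_add_one_ne_zero] using X_pow_dvd_iff.mp hdvd
    have hp0 : p.coeff 0 = 0 := hp.coeff_zero_eq_zero_of_coeff_one_of_coeff_two (by omega)
      (hlow 0 (by omega)) (hlow 1 (by omega))
    exact X_pow_succ_dvd_iff_derivative.mpr ⟨hp0, hdvd⟩

end Polynomial

namespace Multiset

theorem X_pow_dvd_prod_X_sub_C_of_consecutive_esymm_eq_zero {s : Multiset ℝ} {r : ℕ}
    (h1 : s.esymm (r + 1) = 0) (h2 : s.esymm (r + 2) = 0) :
    X ^ (card s - r) ∣ (s.map (X - C ·)).prod := by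
  have hcoeff : ∀ k ≤ card s,
      (s.map (X - C ·)).prod.coeff (card s - k) = (-1) ^ k * s.esymm k :=
    fun k hk => by rw [prod_X_sub_C_coeff s (by omega), Nat.sub_sub_self hk]
  rcases lt_or_ge (r + 1) (card s) with hr | hr
  · have hsplit : (s.map (X - C ·)).prod.Splits :=
      Splits.multisetProd (forall_mem_map_iff.mpr fun a _ => Splits.X_sub_C a)
    have := hsplit.X_pow_dvd_of_coeff_eq_zero (t := card s - (r + 2))
      (by rw [natDegree_multiset_prod_X_sub_C_eq_card]; omega)
      (by rw [hcoeff _ (by omega), h2, mul_zero])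
      (by rw [show card s - (r + 2) + 1 = card s - (r + 1) by omega, hcoeff _ (by omega), h1,
        mul_zero])
    rwa [show card s - (r + 2) + 2 = card s - r by omega] at this
  · -- here `card s - r ≤ 1`, so only the constant coefficient `± esymm (r + 1)` matters
    rw [X_pow_dvd_iff]
    intro d hd
    rw [show d = card s - (r + 1) by omega, hcoeff _ (by omega), h1, mul_zero]

theorem esymm_eq_zero_of_consecutive_esymm_eq_zero {s : Multiset ℝ} {r j : ℕ}
    (h1 : s.esymm (r + 1) = 0) (h2 : s.esymm (r + 2) = 0) (hj : r < j) : s.esymm j = 0 := by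
  rcases le_or_gt j (card s) with hjs | hjs
  · have := X_pow_dvd_iff.mp (X_pow_dvd_prod_X_sub_C_of_consecutive_esymm_eq_zero h1 h2)
      (card s - j) (by omega)
    rwa [prod_X_sub_C_coeff s (by omega), Nat.sub_sub_self hjs, mul_eq_zero,
      or_iff_right (pow_ne_zero _ (by norm_num))] at this
  · simp [esymm, powersetCard_eq_empty _ hjs]

theorem card_sub_le_count_zero_of_consecutive_esymm_eq_zero {s : Multiset ℝ} {r : ℕ}
    (h1 : s.esymm (r + 1) = 0) (h2 : s.esymm (r + 2) = 0) : card s - r ≤ s.count 0 := by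
  calc card s - r ≤ rootMultiplicity 0 (s.map (X - C ·)).prod :=
        (le_rootMultiplicity_iff (monic_multisetProd_X_sub_C s).ne_zero).mpr
          (by simpa using X_pow_dvd_prod_X_sub_C_of_consecutive_esymm_eq_zero h1 h2)
    _ = s.count 0 := by rw [← count_roots, roots_multiset_prod_X_sub_C]

end Multiset

theorem stmt_5_general {n r : ℕ} (lam : Fin n → ℝ)
    (S : ℕ → ℝ)
    (hS : ∀ k, S k = ∑ s ∈ Finset.powersetCard k Finset.univ, ∏ i ∈ s, lam i)
    (h1 : S (r + 1) = 0) (h2 : S (r + 2) = 0) :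
    (∀ j, r + 1 ≤ j → S j = 0) ∧
      n - r ≤ (Finset.univ.filter (fun i => lam i = 0)).card := by
  set s : Multiset ℝ := Finset.univ.val.map lam
  have hSs : ∀ k, S k = s.esymm k := fun k => by rw [hS, Finset.esymm_map_val]
  rw [hSs] at h1 h2
  refine ⟨fun j hj => hSs j ▸ Multiset.esymm_eq_zero_of_consecutive_esymm_eq_zero h1 h2 hj, ?_⟩
  have hcount := Multiset.card_sub_le_count_zero_of_consecutive_esymm_eq_zero h1 h2
  rw [Multiset.count_map, Multiset.card_map, Finset.card_val, Finset.card_univ,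
    Fintype.card_fin] at hcount
  simp_rw [@eq_comm _ (0 : ℝ)] at hcount
  rwa [Finset.card_def, Finset.filter_val]

/-- If `lam : Fin n → ℝ` are the eigenvalues of a self-adjoint operator, with elementary
symmetric functions `S`, and `S (r+1) = S (r+2) = 0` for some `0 ≤ r ≤ n - 2`, then `S j = 0`
for all `j ≥ r + 1`; equivalently at least `n - r` of the eigenvalues vanish (so the kernel of
the operator has dimension at least `n - r`). -/
theorem stmt_5 {n r : ℕ} (lam : Fin n → ℝ)
    (S : ℕ → ℝ)
    (hS : ∀ k, S k = ∑ s ∈ Finset.powersetCard k Finset.univ, ∏ i ∈ s, lam i)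
    (hr : r ≤ n - 2)
    (h1 : S (r + 1) = 0) (h2 : S (r + 2) = 0) :
    (∀ j, r + 1 ≤ j → S j = 0) ∧
      n - r ≤ (Finset.univ.filter (fun i => lam i = 0)).card :=
  stmt_5_general lam S hS h1 h2
end

section
/- Let u(x_1,…,x_n) = x_1² + ⋯ + x_n² on ℝ^n. Then the Hessian of u satisfies ‖Hess u‖² ≤ 4n(1 + |grad u|²) everywhere, the first and second symmetric curvature functions S_1, S_2 of the graph of u are everywhere positive, but |grad u − V| is not Lebesgue integrable on ℝ^n for any constant V ∈ ℝ^n. -/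
/-!
Here `u = ‖x‖²`, so `Hess u = 2 I` and `grad u = 2x`, and the Hessian bound reads `4n ≤ 4n(1 + 4|x|²)`.
With `g = grad u` the shape operator is `B = (2/W) (1 + g gᵀ)⁻¹`, and Sherman–Morrison gives
`(1 + g gᵀ)⁻¹ = 1 - (1 + |g|²)⁻¹ g gᵀ`. Writing `t = |g|² / (1 + |g|²) ∈ [0, 1)`, the traces of
this matrix and of its square are `n - t` and `n - 2t + t²`, so `S₁ = (2/W)(n - t) > 0` and
`2 S₂ = (2/W)² (n - 1)(n - 2t) > 0`. Finally `|2x - V| → ∞` at infinity while Lebesgue measure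
is infinite, so `|2x - V|` is not integrable.
-/

open MeasureTheory Filter Topology

namespace Matrix

variable {ι : Type*} [Fintype ι] (g : ι → ℝ)

theorem vecMulVec_self_mul_self :
    vecMulVec g g * vecMulVec g g = (g ⬝ᵥ g) • vecMulVec g g := by
  rw [vecMulVec_mul_vecMulVec, vecMulVec_smul]

theorem inv_one_add_dotProduct_self_mul_mem_Ico :
    (1 + g ⬝ᵥ g)⁻¹ * (g ⬝ᵥ g) ∈ Set.Ico 0 1 := by
  have hc := dotProduct_self_star_nonneg g
  refine ⟨by positivity, ?_⟩
  rw [inv_mul_lt_iff₀ (by positivity)]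
  linarith

theorem trace_smul_mul_smul_lt_sq {A : Matrix ι ι ℝ} (hA : (A * A).trace < A.trace ^ 2) {a : ℝ}
    (ha : a ≠ 0) : (a • A * a • A).trace < (a • A).trace ^ 2 := by
  rw [smul_mul_smul_comm, trace_smul, trace_smul, smul_eq_mul, smul_eq_mul, mul_pow, ← sq]
  exact mul_lt_mul_of_pos_left hA (by positivity)

variable [DecidableEq ι]

theorem inv_one_add_vecMulVec_self :
    (1 + vecMulVec g g)⁻¹ = 1 - (1 + g ⬝ᵥ g)⁻¹ • vecMulVec g g := by
  have hc : 1 + g ⬝ᵥ g ≠ 0 :=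
    (add_pos_of_pos_of_nonneg one_pos (dotProduct_self_star_nonneg g)).ne'
  apply inv_eq_right_inv
  rw [mul_sub, mul_one, Matrix.mul_smul, add_mul, one_mul, vecMulVec_self_mul_self,
    show vecMulVec g g + (g ⬝ᵥ g) • vecMulVec g g = (1 + g ⬝ᵥ g) • vecMulVec g g by
      rw [add_smul, one_smul],
    smul_smul, inv_mul_cancel₀ hc, one_smul, add_sub_cancel_right]

theorem trace_inv_one_add_vecMulVec_self :
    (1 + vecMulVec g g)⁻¹.trace = Fintype.card ι - (1 + g ⬝ᵥ g)⁻¹ * (g ⬝ᵥ g) := by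
  rw [inv_one_add_vecMulVec_self, trace_sub, trace_smul, trace_one, trace_vecMulVec, smul_eq_mul]

theorem trace_inv_one_add_vecMulVec_self_mul_self :
    ((1 + vecMulVec g g)⁻¹ * (1 + vecMulVec g g)⁻¹).trace =
      Fintype.card ι - 2 * ((1 + g ⬝ᵥ g)⁻¹ * (g ⬝ᵥ g)) + ((1 + g ⬝ᵥ g)⁻¹ * (g ⬝ᵥ g)) ^ 2 := by
  rw [inv_one_add_vecMulVec_self, sub_mul, one_mul, mul_sub, mul_one, Matrix.smul_mul,
    Matrix.mul_smul, vecMulVec_self_mul_self, smul_smul]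
  simp only [trace_sub, trace_smul, trace_one, trace_vecMulVec, smul_eq_mul]
  ring

theorem trace_inv_one_add_vecMulVec_self_pos [Nonempty ι] :
    0 < (1 + vecMulVec g g)⁻¹.trace := by
  have ht := (inv_one_add_dotProduct_self_mul_mem_Ico g).2
  have hι : (1 : ℝ) ≤ Fintype.card ι := by exact_mod_cast Fintype.card_pos
  rw [trace_inv_one_add_vecMulVec_self]
  linarith

theorem trace_inv_one_add_vecMulVec_self_mul_self_lt (hι : 2 ≤ Fintype.card ι) :
    ((1 + vecMulVec g g)⁻¹ * (1 + vecMulVec g g)⁻¹).trace < (1 + vecMulVec g g)⁻¹.trace ^ 2 := by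
  obtain ⟨ht0, ht1⟩ := inv_one_add_dotProduct_self_mul_mem_Ico g
  have hn : (2 : ℝ) ≤ Fintype.card ι := by exact_mod_cast hι
  rw [trace_inv_one_add_vecMulVec_self, trace_inv_one_add_vecMulVec_self_mul_self]
  set t := (1 + g ⬝ᵥ g)⁻¹ * (g ⬝ᵥ g)
  set n : ℝ := (Fintype.card ι : ℝ)
  -- `(n - t)² - (n - 2t + t²) = (n - 1)(n - 2t)`
  nlinarith [mul_pos (by linarith : 0 < n - 1) (by linarith : 0 < n - 2 * t)]

end Matrix

section NormSq

variable {E : Type*} [NormedAddCommGroup E] [InnerProductSpace ℝ E]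
open scoped RealInnerProductSpace

theorem gradient_norm_sq [CompleteSpace E] (x : E) :
    gradient (fun x : E => ‖x‖ ^ 2) x = (2 : ℝ) • x := by
  rw [gradient, fderiv_norm_sq_apply, map_nsmul, two_nsmul, two_smul]
  exact congrArg (fun y => y + y) ((InnerProductSpace.toDual ℝ E).symm_apply_apply x)

theorem iteratedFDeriv_two_norm_sq_apply (x v w : E) :
    iteratedFDeriv ℝ 2 (fun x : E => ‖x‖ ^ 2) x ![v, w] = 2 * ⟪v, w⟫ := by
  have h : fderiv ℝ (fun x : E => ‖x‖ ^ 2) = ⇑((2 : ℝ) • innerSL ℝ (E := E)) := by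
    rw [fderiv_norm_sq]; ext; simp
  rw [iteratedFDeriv_two_apply, h, ContinuousLinearMap.fderiv]
  simp [innerSL_apply_apply ℝ]

end NormSq

theorem not_integrable_of_tendsto_norm_cocompact_atTop {X F : Type*} [TopologicalSpace X]
    [MeasurableSpace X] [NormedAddCommGroup F] {μ : Measure X} [IsFiniteMeasureOnCompacts μ]
    (hμ : μ Set.univ = ⊤) {f : X → F} (hf : Tendsto (‖f ·‖) (cocompact X) atTop) :
    ¬Integrable f μ := by
  intro hint
  obtain ⟨K, hK, hKc⟩ := mem_cocompact.1 (hf.eventually_ge_atTop 1)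
  have hcover : Set.univ ⊆ {x | 1 ≤ ‖f x‖} ∪ K := fun x _ => by
    by_cases hx : x ∈ K
    · exact Or.inr hx
    · exact Or.inl (hKc hx)
  have : μ Set.univ < ⊤ := calc
    μ Set.univ ≤ μ {x | 1 ≤ ‖f x‖} + μ K := (measure_mono hcover).trans (measure_union_le _ _)
    _ < ⊤ := ENNReal.add_lt_top.2 ⟨hint.measure_norm_ge_lt_top one_pos, hK.measure_lt_top⟩
  exact this.ne hμ

section SmulSub

variable {E : Type*} [NormedAddCommGroup E] [NormedSpace ℝ E]

theorem tendsto_norm_smul_sub_cocompact_atTop [ProperSpace E] {a : ℝ} (ha : a ≠ 0) (V : E) :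
    Tendsto (fun x : E => ‖a • x - V‖) (cocompact E) atTop := by
  have hlin : Tendsto (fun x : E => |a| * ‖x‖ - ‖V‖) (cocompact E) atTop :=
    tendsto_atTop_add_const_right _ _
      (tendsto_norm_cocompact_atTop.const_mul_atTop (abs_pos.2 ha))
  refine tendsto_atTop_mono (fun x => ?_) hlin
  have := norm_sub_norm_le (a • x) V
  rw [norm_smul, Real.norm_eq_abs] at this
  linarith

theorem not_integrable_norm_smul_sub [FiniteDimensional ℝ E] [Nontrivial E] [MeasurableSpace E]
    [BorelSpace E] (μ : Measure E) [μ.IsAddHaarMeasure] {a : ℝ} (ha : a ≠ 0) (V : E) :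
    ¬Integrable (fun x => ‖a • x - V‖) μ := by
  have : ProperSpace E := FiniteDimensional.proper ℝ E
  refine not_integrable_of_tendsto_norm_cocompact_atTop
    (measure_univ_of_isAddLeftInvariant μ) ?_
  simpa only [norm_norm] using tendsto_norm_smul_sub_cocompact_atTop ha V

end SmulSub

/-- For `u(x) = x₁² + ⋯ + xₙ²` on `ℝⁿ` (`n ≥ 2`): the Hessian satisfies
`‖Hess u‖² ≤ 4n(1 + |grad u|²)`, the symmetric curvature functions `S₁, S₂` of the graph of
`u` (computed from the shape operator `B = (1/W)(I + ∇u ∇uᵀ)⁻¹ Hess u` in graph coordinates)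
are everywhere positive, but `|grad u - V|` is not Lebesgue integrable for any constant `V`. -/
theorem stmt_13 {n : ℕ} (hn : 2 ≤ n)
    (u : EuclideanSpace ℝ (Fin n) → ℝ) (hu : ∀ p, u p = ∑ i, (p i) ^ 2)
    (Hm : EuclideanSpace ℝ (Fin n) → Matrix (Fin n) (Fin n) ℝ)
    (hHm : ∀ p i j, Hm p i j =
      iteratedFDeriv ℝ 2 u p ![EuclideanSpace.single i 1, EuclideanSpace.single j 1])
    (W : EuclideanSpace ℝ (Fin n) → ℝ)
    (hW : ∀ p, W p = Real.sqrt (1 + ‖gradient u p‖ ^ 2))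
    (G : EuclideanSpace ℝ (Fin n) → Matrix (Fin n) (Fin n) ℝ)
    (hG : ∀ p, G p = 1 + Matrix.vecMulVec (fun i => gradient u p i) (fun i => gradient u p i))
    (B : EuclideanSpace ℝ (Fin n) → Matrix (Fin n) (Fin n) ℝ)
    (hB : ∀ p, B p = (W p)⁻¹ • ((G p)⁻¹ * Hm p))
    (S1 S2 : EuclideanSpace ℝ (Fin n) → ℝ)
    (hS1 : ∀ p, S1 p = (B p).trace)
    (hS2 : ∀ p, S2 p = ((B p).trace ^ 2 - (B p * B p).trace) / 2) :
    (∀ p, ∑ i, ∑ j, (Hm p i j) ^ 2 ≤ 4 * n * (1 + ‖gradient u p‖ ^ 2)) ∧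
      (∀ p, 0 < S1 p) ∧ (∀ p, 0 < S2 p) ∧
      (∀ V : EuclideanSpace ℝ (Fin n),
        ¬ Integrable (fun p => ‖gradient u p - V‖) volume) := by
  have hu_eq : u = fun x => ‖x‖ ^ 2 := by
    funext x
    simp [hu, EuclideanSpace.norm_sq_eq]
  have hHess : ∀ p, Hm p = (2 : ℝ) • 1 := fun p => by
    ext i j
    rw [hHm, hu_eq, iteratedFDeriv_two_norm_sq_apply, EuclideanSpace.inner_single_left]
    simp [Matrix.one_apply]
  have hBsmul : ∀ p, B p = (2 * (W p)⁻¹) • (G p)⁻¹ := fun p => by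
    rw [hB, hHess, Matrix.mul_smul, mul_one, smul_smul, mul_comm]
  have hcoef : ∀ p, 0 < 2 * (W p)⁻¹ := fun p => by
    rw [hW]; positivity
  have : Nonempty (Fin n) := ⟨⟨0, by omega⟩⟩
  refine ⟨fun p => ?_, fun p => ?_, fun p => ?_, fun V => ?_⟩
  · have hsum : ∑ i, ∑ j, (Hm p i j) ^ 2 = 4 * n := by
      simp [hHess, Matrix.one_apply, mul_comm]
      norm_num
    rw [hsum]
    nlinarith [show (0 : ℝ) ≤ 4 * n by positivity, sq_nonneg ‖gradient u p‖]
  · rw [hS1, hBsmul, Matrix.trace_smul, smul_eq_mul, hG]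
    exact mul_pos (hcoef p) (Matrix.trace_inv_one_add_vecMulVec_self_pos _)
  · have hlt := Matrix.trace_smul_mul_smul_lt_sq (Matrix.trace_inv_one_add_vecMulVec_self_mul_self_lt
      (fun i => gradient u p i) (by simpa using hn)) (hcoef p).ne'
    rw [hS2, hBsmul, hG]
    exact half_pos (sub_pos.2 hlt)
  · simpa [hu_eq, gradient_norm_sq] using not_integrable_norm_smul_sub volume two_ne_zero V
end

section
/- Let M be a complete, noncompact, oriented hypersurface of a space form with bounded second fundamental form, and f: M → ℝ smooth with |∇f| ∈ L¹(M). If L_r f := div(P_r ∇f) does not change sign on M, then L_r f = 0 identically on M. -/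
open MeasureTheory



theorem aux_coord_le {n : ℕ} (v : EuclideanSpace ℝ (Fin n)) (i : Fin n) : |v i| ≤ ‖v‖ := by
  have h1 : (inner ℝ (EuclideanSpace.single i (1:ℝ)) v : ℝ) = v i := by
    rw [EuclideanSpace.inner_single_left]; simp
  calc |v i| = |(inner ℝ (EuclideanSpace.single i (1:ℝ)) v : ℝ)| := by rw [h1]
    _ ≤ ‖EuclideanSpace.single i (1:ℝ)‖ * ‖v‖ := abs_real_inner_le_norm _ _
    _ = ‖v‖ := by rw [EuclideanSpace.norm_single]; simp

theorem aux_fderiv_coord {n : ℕ} (X : EuclideanSpace ℝ (Fin n) → EuclideanSpace ℝ (Fin n))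
    (hX : Differentiable ℝ X) (i : Fin n) (x : EuclideanSpace ℝ (Fin n)) :
    fderiv ℝ (fun q => X q i) x = (EuclideanSpace.proj i).comp (fderiv ℝ X x) := by
  have h0 := ((EuclideanSpace.proj i : EuclideanSpace ℝ (Fin n) →L[ℝ] ℝ).hasFDerivAt
      (x := X x)).comp x (hX x).hasFDerivAt
  exact h0.fderiv

theorem aux_div_zero {n : ℕ} (X : EuclideanSpace ℝ (Fin n) → EuclideanSpace ℝ (Fin n))
    (hX : ContDiff ℝ (⊤ : ℕ∞) X)
    (hXint : Integrable (fun p => ‖X p‖) volume)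
    (d : EuclideanSpace ℝ (Fin n) → ℝ)
    (hd : ∀ p, d p = ∑ i, fderiv ℝ X p (EuclideanSpace.single i 1) i)
    (hd0 : ∀ p, 0 ≤ d p) : ∀ p, d p = 0 := by
  classical
  by_contra hcon
  push_neg at hcon
  obtain ⟨p₀, hp₀⟩ := hcon
  have hdpos : 0 < d p₀ := (hd0 p₀).lt_of_ne (Ne.symm hp₀)
  have hXdiff : Differentiable ℝ X := hX.differentiable (by simp)
  -- coordinate functions
  set g : Fin n → EuclideanSpace ℝ (Fin n) → ℝ := fun i q => X q i with hgdef
  have hgsm : ∀ i, ContDiff ℝ (⊤ : ℕ∞) (g i) := fun i =>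
    (EuclideanSpace.proj i : EuclideanSpace ℝ (Fin n) →L[ℝ] ℝ).contDiff.comp hX
  have hgdiff : ∀ i, Differentiable ℝ (g i) := fun i => (hgsm i).differentiable (by simp)
  have hgfderiv : ∀ (i) (x), fderiv ℝ (g i) x = (EuclideanSpace.proj i).comp (fderiv ℝ X x) :=
    fun i x => aux_fderiv_coord X hXdiff i x
  -- continuity of d
  have hdc : Continuous d := by
    have h1 : ∀ i : Fin n, Continuous fun p => (fderiv ℝ X p (EuclideanSpace.single i 1)) i := by
      intro i
      exact ((EuclideanSpace.proj i : EuclideanSpace ℝ (Fin n) →L[ℝ] ℝ).continuous).comp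
        ((hX.continuous_fderiv (by simp)).clm_apply continuous_const)
    have h2 : Continuous fun p => ∑ i, (fderiv ℝ X p (EuclideanSpace.single i 1)) i :=
      continuous_finset_sum _ fun i _ => h1 i
    have : d = fun p => ∑ i, (fderiv ℝ X p (EuclideanSpace.single i 1)) i := funext hd
    rw [this]; exact h2
  -- ball where d is large
  obtain ⟨r, hr0, hball⟩ := Metric.isOpen_iff.1 (isOpen_lt (continuous_const : Continuous fun _ => d p₀ / 2) hdc) p₀ (by
    simp only [Set.mem_setOf_eq]; linarith)
  set K := Metric.closedBall p₀ (r/2) with hKdef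
  have hKc : IsCompact K := isCompact_closedBall _ _
  have hKm : MeasurableSet K := measurableSet_closedBall
  have hKpos : 0 < (volume K).toReal := by
    refine ENNReal.toReal_pos ?_ hKc.measure_lt_top.ne
    have h1 : 0 < volume (Metric.ball p₀ (r/2)) := Metric.measure_ball_pos volume p₀ (half_pos hr0)
    exact (lt_of_lt_of_le h1 (measure_mono Metric.ball_subset_closedBall)).ne'
  have hKd : ∀ x ∈ K, d p₀ / 2 ≤ d x := fun x hx =>
    (hball (Metric.closedBall_subset_ball (by linarith) hx)).le
  set c := d p₀ / 2 * (volume K).toReal with hcdef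
  have hc : 0 < c := mul_pos (by linarith) hKpos
  have hI0 : 0 ≤ ∫ x, ‖X x‖ := integral_nonneg fun x => norm_nonneg _
  -- bump function
  set φb : ContDiffBump (0 : EuclideanSpace ℝ (Fin n)) := ⟨1, 2, one_pos, one_lt_two⟩ with hφbdef
  have hrIn : φb.rIn = 1 := rfl
  have hrOut : φb.rOut = 2 := rfl
  obtain ⟨D, hD⟩ := (φb.hasCompactSupport.fderiv ℝ).exists_bound_of_continuous
      ((φb.contDiff (n := (⊤ : ℕ∞))).continuous_fderiv (by simp))
  have hD0 : 0 ≤ D := le_trans (norm_nonneg _) (hD 0)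
  -- main estimate
  have main : ∀ R : ℝ, 1 ≤ R → ‖p₀‖ + r ≤ R →
      c ≤ (n : ℝ) * (D * ∫ x, ‖X x‖) / R := by
    intro R hR1 hRr
    have hR0 : (0:ℝ) < R := lt_of_lt_of_le one_pos hR1
    set L : EuclideanSpace ℝ (Fin n) →L[ℝ] EuclideanSpace ℝ (Fin n) :=
      R⁻¹ • ContinuousLinearMap.id ℝ _ with hLdef
    have hLval : ∀ x, L x = R⁻¹ • x := fun x => rfl
    have hLnormv : ∀ x : EuclideanSpace ℝ (Fin n), ‖L x‖ = R⁻¹ * ‖x‖ := by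
      intro x
      rw [hLval, norm_smul, Real.norm_eq_abs, abs_of_pos (inv_pos.2 hR0)]
    set φ : EuclideanSpace ℝ (Fin n) → ℝ := fun x => φb (L x) with hφdef
    have hφsm : ContDiff ℝ ((⊤ : ℕ∞) : WithTop ℕ∞) φ := (φb.contDiff (n := (⊤ : ℕ∞))).comp L.contDiff
    have hφdiff : Differentiable ℝ φ := hφsm.differentiable (by simp)
    have hφder : ∀ x, fderiv ℝ φ x = (fderiv ℝ (φb : _ → ℝ) (L x)).comp L := fun x =>
      (((((φb.contDiff (n := (⊤ : ℕ∞))).differentiable (by simp)) (L x)).hasFDerivAt).comp x L.hasFDerivAt).fderiv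
    have hφderbound : ∀ (x v : EuclideanSpace ℝ (Fin n)), ‖v‖ ≤ 1 →
        |fderiv ℝ φ x v| ≤ D / R := by
      intro x v hv
      rw [hφder, ContinuousLinearMap.comp_apply]
      have h1 : ‖fderiv ℝ (φb : _ → ℝ) (L x) (L v)‖ ≤ ‖fderiv ℝ (φb : _ → ℝ) (L x)‖ * ‖L v‖ :=
        ContinuousLinearMap.le_opNorm _ _
      rw [Real.norm_eq_abs] at h1
      have h2 : ‖L v‖ ≤ R⁻¹ := by
        rw [hLnormv]
        calc R⁻¹ * ‖v‖ ≤ R⁻¹ * 1 := by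
              exact mul_le_mul_of_nonneg_left hv (inv_pos.2 hR0).le
          _ = R⁻¹ := mul_one _
      calc |fderiv ℝ (φb : _ → ℝ) (L x) (L v)| ≤ ‖fderiv ℝ (φb : _ → ℝ) (L x)‖ * ‖L v‖ := h1
        _ ≤ D * R⁻¹ := mul_le_mul (hD _) h2 (norm_nonneg _) hD0
        _ = D / R := by rw [div_eq_mul_inv]
    have hφ0 : ∀ x, 0 ≤ φ x := fun x => φb.nonneg
    have hφeq1 : ∀ x : EuclideanSpace ℝ (Fin n), ‖x‖ ≤ R → φ x = 1 := by
      intro x hx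
      apply φb.one_of_mem_closedBall
      rw [Metric.mem_closedBall, dist_zero_right, hrIn, hLnormv]
      rw [inv_mul_le_iff₀ hR0]
      linarith
    have hφsupp : HasCompactSupport φ := by
      apply HasCompactSupport.intro (isCompact_closedBall (0 : EuclideanSpace ℝ (Fin n)) (2*R))
      intro x hx
      apply φb.zero_of_le_dist
      rw [dist_zero_right, hrOut, hLnormv]
      rw [Metric.mem_closedBall, dist_zero_right, not_le] at hx
      have h6 : R⁻¹ * (2 * R) ≤ R⁻¹ * ‖x‖ :=
        mul_le_mul_of_nonneg_left hx.le (inv_nonneg.2 hR0.le)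
      calc (2:ℝ) = R⁻¹ * (2 * R) := by
            rw [mul_comm 2 R, ← mul_assoc, inv_mul_cancel₀ hR0.ne', one_mul]
        _ ≤ R⁻¹ * ‖x‖ := h6
    -- integrability
    have hint1 : ∀ i : Fin n,
        Integrable (fun x => φ x * fderiv ℝ (g i) x (EuclideanSpace.single i 1)) volume := by
      intro i
      apply Continuous.integrable_of_hasCompactSupport
      · exact hφsm.continuous.mul
          (((hgsm i).continuous_fderiv (by simp)).clm_apply continuous_const)
      · exact hφsupp.mul_right
    have hint2 : ∀ (i : Fin n) (v : EuclideanSpace ℝ (Fin n)),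
        Integrable (fun x => fderiv ℝ φ x v * g i x) volume := by
      intro i v
      apply Continuous.integrable_of_hasCompactSupport
      · exact ((hφsm.continuous_fderiv (by simp)).clm_apply continuous_const).mul
          (hgsm i).continuous
      · exact (hφsupp.fderiv_apply ℝ v).mul_right
    have hint3 : ∀ i : Fin n, Integrable (fun x => φ x * g i x) volume := by
      intro i
      apply Continuous.integrable_of_hasCompactSupport
      · exact hφsm.continuous.mul (hgsm i).continuous
      · exact hφsupp.mul_right
    -- integration by parts
    have hIBP : ∀ i : Fin n,
        ∫ x, φ x * fderiv ℝ (g i) x (EuclideanSpace.single i 1) =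
          - ∫ x, fderiv ℝ φ x (EuclideanSpace.single i 1) * g i x := fun i =>
      integral_mul_fderiv_eq_neg_fderiv_mul_of_integrable (hint2 i _) (hint1 i) (hint3 i)
        (fun x _ => hφdiff x) (fun x _ => hgdiff i x)
    have hsum : (fun x => φ x * d x) =
        fun x => ∑ i, φ x * fderiv ℝ (g i) x (EuclideanSpace.single i 1) := by
      funext x
      rw [hd x, Finset.mul_sum]
      refine Finset.sum_congr rfl fun i _ => ?_
      rw [hgfderiv]
      rfl
    have upper : ∫ x, φ x * d x ≤ (n : ℝ) * (D * ∫ x, ‖X x‖) / R := by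
      calc ∫ x, φ x * d x
          = ∑ i, ∫ x, φ x * fderiv ℝ (g i) x (EuclideanSpace.single i 1) := by
            rw [hsum]; exact integral_finset_sum _ fun i _ => hint1 i
        _ = ∑ i : Fin n, - ∫ x, fderiv ℝ φ x (EuclideanSpace.single i 1) * g i x :=
            Finset.sum_congr rfl fun i _ => hIBP i
        _ ≤ ∑ i : Fin n, (D / R) * ∫ x, ‖X x‖ := by
            refine Finset.sum_le_sum fun i _ => ?_
            have h1 : ‖∫ x, fderiv ℝ φ x (EuclideanSpace.single i 1) * g i x‖ ≤
                ∫ x, (D / R) * ‖X x‖ := by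
              apply norm_integral_le_of_norm_le (hXint.const_mul _)
              filter_upwards with x
              rw [Real.norm_eq_abs, abs_mul]
              have h2 := hφderbound x (EuclideanSpace.single i 1)
                (by rw [EuclideanSpace.norm_single]; simp)
              have h3 : |g i x| ≤ ‖X x‖ := aux_coord_le (X x) i
              exact mul_le_mul h2 h3 (abs_nonneg _) (div_nonneg hD0 hR0.le)
            rw [integral_const_mul] at h1
            have h4 := neg_le_abs (∫ x, fderiv ℝ φ x (EuclideanSpace.single i 1) * g i x)
            rw [Real.norm_eq_abs] at h1
            linarith
        _ = (n : ℝ) * (D * ∫ x, ‖X x‖) / R := by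
            rw [Finset.sum_const, Finset.card_univ, Fintype.card_fin, nsmul_eq_mul]
            ring
    have lower : c ≤ ∫ x, φ x * d x := by
      have hKint : IntegrableOn d K volume := hdc.continuousOn.integrableOn_compact hKc
      have h1 : c ≤ ∫ x in K, d x := by
        rw [hcdef]
        have := setIntegral_ge_of_const_le hKm hKc.measure_lt_top.ne hKd hKint
        rw [smul_eq_mul, mul_comm, Measure.real] at this
        exact this
      have h2 : ∫ x in K, d x ≤ ∫ x, φ x * d x := by
        rw [← integral_indicator hKm]
        apply integral_mono ((integrable_indicator_iff hKm).2 hKint)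
          (Continuous.integrable_of_hasCompactSupport (hφsm.continuous.mul hdc) hφsupp.mul_right)
        intro x
        show K.indicator d x ≤ φ x * d x
        by_cases hx : x ∈ K
        · rw [Set.indicator_of_mem hx]
          have hxn : ‖x‖ ≤ R := by
            have hdist : dist x p₀ ≤ r / 2 := Metric.mem_closedBall.1 hx
            calc ‖x‖ = ‖p₀ + (x - p₀)‖ := by rw [add_sub_cancel]
              _ ≤ ‖p₀‖ + ‖x - p₀‖ := norm_add_le _ _
              _ = ‖p₀‖ + dist x p₀ := by rw [dist_eq_norm]
              _ ≤ ‖p₀‖ + r / 2 := by linarith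
              _ ≤ R := by linarith
          rw [hφeq1 x hxn, one_mul]
        · rw [Set.indicator_of_notMem hx]
          exact mul_nonneg (hφ0 x) (hd0 x)
      linarith
    linarith
  -- final contradiction
  have hKc0 : 0 ≤ (n : ℝ) * (D * ∫ x, ‖X x‖) := by positivity
  set Q := (n : ℝ) * (D * ∫ x, ‖X x‖) with hQdef
  set R := max (max 1 (‖p₀‖ + r)) (Q / c + 1) with hRdef
  have hR1 : (1:ℝ) ≤ R := le_trans (le_max_left _ _) (le_max_left _ _)
  have hRr : ‖p₀‖ + r ≤ R := le_trans (le_max_right 1 _) (le_max_left _ _)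
  have hRK : Q / c + 1 ≤ R := le_max_right _ _
  have h := main R hR1 hRr
  have hR0 : (0:ℝ) < R := lt_of_lt_of_le one_pos hR1
  have hlt : Q / R < c := by
    rw [div_lt_iff₀ hR0]
    have h5 : Q / c < R := lt_of_lt_of_le (lt_add_one _) hRK
    calc Q = c * (Q / c) := by field_simp
      _ < c * R := mul_lt_mul_of_pos_left h5 hc
  linarith

/-- (Corollary, in the model of a complete noncompact flat leaf `ℝⁿ`.)  Let `P` be a smooth
uniformly bounded field of (Newton-tensor) operators on `ℝⁿ` and `f : ℝⁿ → ℝ` smooth with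
`|∇f| ∈ L¹`.  If `L_r f = div(P ∇f)` does not change sign, then `L_r f ≡ 0`. -/
theorem stmt_15 {n : ℕ}
    (P : EuclideanSpace ℝ (Fin n) → EuclideanSpace ℝ (Fin n) →L[ℝ] EuclideanSpace ℝ (Fin n))
    (hP : ContDiff ℝ (⊤ : ℕ∞) fun p => P p)
    (hPsym : ∀ p v w, (inner ℝ (P p v) w : ℝ) = inner ℝ v (P p w))
    (C : ℝ) (hC : ∀ p, ‖P p‖ ≤ C)
    (f : EuclideanSpace ℝ (Fin n) → ℝ) (hf : ContDiff ℝ (⊤ : ℕ∞) f)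
    (hint : Integrable (fun p => ‖gradient f p‖) volume)
    (Lf : EuclideanSpace ℝ (Fin n) → ℝ)
    (hLf : ∀ p, Lf p =
      ∑ i, fderiv ℝ (fun q => P q (gradient f q)) p (EuclideanSpace.single i 1) i)
    (hsign : (∀ p, 0 ≤ Lf p) ∨ (∀ p, Lf p ≤ 0)) :
    ∀ p, Lf p = 0 := by
  set X : EuclideanSpace ℝ (Fin n) → EuclideanSpace ℝ (Fin n) :=
    fun q => P q (gradient f q) with hXdef
  have hgrad : ContDiff ℝ (⊤ : ℕ∞) (gradient f) := by
    have h1 : ContDiff ℝ (⊤ : ℕ∞) (fderiv ℝ f) := hf.fderiv_right (by simp)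
    exact (InnerProductSpace.toDual ℝ
      (EuclideanSpace ℝ (Fin n))).symm.contDiff.comp h1
  have hXsm : ContDiff ℝ (⊤ : ℕ∞) X := hP.clm_apply hgrad
  have hC0 : 0 ≤ C := le_trans (norm_nonneg _) (hC 0)
  have hXint : Integrable (fun p => ‖X p‖) volume := by
    apply Integrable.mono' (hint.const_mul C) hXsm.continuous.norm.aestronglyMeasurable
    filter_upwards with p
    rw [Real.norm_eq_abs, abs_of_nonneg (norm_nonneg _)]
    calc ‖X p‖ ≤ ‖P p‖ * ‖gradient f p‖ := (P p).le_opNorm _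
      _ ≤ C * ‖gradient f p‖ := mul_le_mul_of_nonneg_right (hC p) (norm_nonneg _)
  rcases hsign with hpos | hneg
  · exact aux_div_zero X hXsm hXint Lf hLf hpos
  · intro p
    have h0 : ∀ q, -Lf q = 0 := by
      apply aux_div_zero (fun q => -X q) hXsm.neg (by simpa using hXint)
      · intro q
        simp only [fderiv_neg, ContinuousLinearMap.neg_apply]
        rw [hLf q]
        rw [← Finset.sum_neg_distrib]
        refine Finset.sum_congr rfl fun i _ => ?_
        simp
      · intro q
        linarith [hneg q]
    linarith [h0 p]
end

section
/- There is no smooth, transversely orientable, codimension-one foliation of the round sphere S^{n+1} all of whose leaves are complete hypersurfaces with constant scalar curvature greater than 1 (each leaf's scalar curvature constant, possibly varying from leaf to leaf). -/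
open MeasureTheory
local notation "⟪" x ", " y "⟫" => @inner ℝ _ _ x y

lemma sum_inner_map_eq {ι κ : Type*} [Fintype ι] [Fintype κ]
    {F : Type*} [NormedAddCommGroup F] [InnerProductSpace ℝ F] [FiniteDimensional ℝ F]
    (B : F →L[ℝ] F) (b : OrthonormalBasis ι ℝ F) (c : OrthonormalBasis κ ℝ F) :
    ∑ i, ⟪B (b i), b i⟫ = ∑ j, ⟪B (c j), c j⟫ := by
  have h1 : ∀ i, ⟪B (b i), b i⟫ = ∑ j, ⟪B (b i), c j⟫ * ⟪c j, b i⟫ :=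
    fun i => (c.sum_inner_mul_inner _ _).symm
  rw [Finset.sum_congr rfl (fun i _ => h1 i), Finset.sum_comm]
  refine Finset.sum_congr rfl fun j _ => ?_
  have h2 : ∀ i, ⟪B (b i), c j⟫ * ⟪c j, b i⟫
      = ⟪c j, b i⟫ * ⟪b i, ContinuousLinearMap.adjoint B (c j)⟫ := by
    intro i
    rw [mul_comm]
    congr 1
    rw [ContinuousLinearMap.adjoint_inner_right, real_inner_comm]
  rw [Finset.sum_congr rfl (fun i _ => h2 i), b.sum_inner_mul_inner,
    ContinuousLinearMap.adjoint_inner_right, real_inner_comm]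

lemma trace_split {n : ℕ}
    {p Np : EuclideanSpace ℝ (Fin (n+2))} {e : Fin n → EuclideanSpace ℝ (Fin (n+2))}
    (hp : ‖p‖ = 1) (hNp : ‖Np‖ = 1) (hNpp : ⟪Np, p⟫ = 0)
    (he : Orthonormal ℝ e) (hep : ∀ i, ⟪e i, p⟫ = 0) (heN : ∀ i, ⟪e i, Np⟫ = 0)
    (B : EuclideanSpace ℝ (Fin (n+2)) →L[ℝ] EuclideanSpace ℝ (Fin (n+2))) :
    ∑ k, ⟪B (EuclideanSpace.basisFun (Fin (n+2)) ℝ k), EuclideanSpace.basisFun (Fin (n+2)) ℝ k⟫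
      = (∑ i, ⟪B (e i), e i⟫) + ⟪B Np, Np⟫ + ⟪B p, p⟫ := by
  haveI : Nonempty (Fin n ⊕ Fin 2) := ⟨Sum.inr 0⟩
  set v : Fin n ⊕ Fin 2 → EuclideanSpace ℝ (Fin (n+2)) := Sum.elim e ![Np, p] with hv_def
  have hnorm : ∀ x : EuclideanSpace ℝ (Fin (n+2)), ‖x‖ = 1 → ⟪x, x⟫ = (1:ℝ) := by
    intro x hx
    rw [real_inner_self_eq_norm_sq, hx]; norm_num
  have hv : Orthonormal ℝ v := by
    rw [orthonormal_iff_ite]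
    rw [orthonormal_iff_ite] at he
    rintro (i | i) (j | j)
    · simpa [hv_def] using he i j
    · fin_cases j <;> simp [hv_def, hep, heN]
    · fin_cases i <;>
        [ (simp only [hv_def, Sum.elim_inl, Sum.elim_inr]; rw [real_inner_comm]);
          (simp only [hv_def, Sum.elim_inl, Sum.elim_inr]; rw [real_inner_comm])] <;>
        simp [heN, hep]
    · fin_cases i <;> fin_cases j <;>
        simp [hv_def, hnorm _ hNp, hnorm _ hp, hNpp, real_inner_comm Np p, hNp, hp]
  have card : Fintype.card (Fin n ⊕ Fin 2) = Module.finrank ℝ (EuclideanSpace ℝ (Fin (n+2))) := by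
    simp
  let b0 := basisOfOrthonormalOfCardEqFinrank hv card
  have hb0 : ⇑b0 = v := coe_basisOfOrthonormalOfCardEqFinrank hv card
  let b := b0.toOrthonormalBasis (by rwa [hb0])
  have hb : ∀ k, b k = v k := by
    intro k
    show b0.toOrthonormalBasis _ k = _
    rw [Module.Basis.coe_toOrthonormalBasis, hb0]
  rw [sum_inner_map_eq B (EuclideanSpace.basisFun (Fin (n+2)) ℝ) b, Fintype.sum_sum_type]
  simp only [hb, hv_def, Sum.elim_inl, Sum.elim_inr, Fin.sum_univ_two]
  simp [add_assoc]


lemma inner_fderiv_self_zero {d : ℕ} {N : EuclideanSpace ℝ (Fin d) → EuclideanSpace ℝ (Fin d)}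
    (hN : ContDiff ℝ (⊤ : ℕ∞) N) {p : EuclideanSpace ℝ (Fin d)} (hp : ‖p‖ = 1)
    (hunit : ∀ q : EuclideanSpace ℝ (Fin d), ‖q‖ = 1 → ‖N q‖ = 1)
    {v : EuclideanSpace ℝ (Fin d)} (hv : ‖v‖ = 1) (hvp : ⟪v, p⟫ = 0) :
    ⟪fderiv ℝ N p v, N p⟫ = 0 := by
  set c : ℝ → EuclideanSpace ℝ (Fin d) := fun t => Real.cos t • p + Real.sin t • v with hc_def
  have hc0 : c 0 = p := by simp [hc_def]
  have hcs : ∀ t, ‖c t‖ = 1 := by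
    intro t
    have hpv : ⟪p, v⟫ = (0:ℝ) := by rw [real_inner_comm]; exact hvp
    have h2 : ⟪c t, c t⟫ = (1:ℝ) := by
      simp only [hc_def, inner_add_add_self, real_inner_smul_left, real_inner_smul_right, hpv, hvp]
      rw [real_inner_self_eq_norm_sq p, real_inner_self_eq_norm_sq v, hp, hv]
      nlinarith [Real.sin_sq_add_cos_sq t]
    have h3 : ‖c t‖ ^ 2 = 1 := by rw [← real_inner_self_eq_norm_sq]; exact h2
    nlinarith [norm_nonneg (c t)]
  have hc : HasDerivAt c v 0 := by
    have h1 : HasDerivAt (fun t : ℝ => Real.cos t • p) ((-Real.sin 0) • p) 0 :=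
      (Real.hasDerivAt_cos 0).smul_const p
    have h2 : HasDerivAt (fun t : ℝ => Real.sin t • v) ((Real.cos 0) • v) 0 :=
      (Real.hasDerivAt_sin 0).smul_const v
    have h3 := h1.add h2
    simp only [Real.sin_zero, Real.cos_zero, neg_zero, zero_smul, one_smul, zero_add] at h3
    exact h3
  have hNc : HasDerivAt (fun t => N (c t)) (fderiv ℝ N p v) 0 := by
    have hF : HasFDerivAt N (fderiv ℝ N p) (c 0) := by
      rw [hc0]; exact (hN.differentiable (by simp) p).hasFDerivAt
    exact hF.comp_hasDerivAt 0 hc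
  have hg : HasDerivAt (fun t => ⟪N (c t), N (c t)⟫)
      (⟪N (c 0), fderiv ℝ N p v⟫ + ⟪fderiv ℝ N p v, N (c 0)⟫) 0 := hNc.inner ℝ hNc
  have hgconst : (fun t => ⟪N (c t), N (c t)⟫) = fun _ : ℝ => (1:ℝ) := by
    funext t
    rw [real_inner_self_eq_norm_sq, hunit _ (hcs t)]; norm_num
  have h0 : ⟪N (c 0), fderiv ℝ N p v⟫ + ⟪fderiv ℝ N p v, N (c 0)⟫ = 0 := by
    have := hg
    rw [hgconst] at this
    exact this.unique (hasDerivAt_const 0 1)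
  rw [hc0] at h0
  rw [real_inner_comm] at h0
  linarith [h0]

noncomputable def Tdiv {d : ℕ} (N : EuclideanSpace ℝ (Fin d) → EuclideanSpace ℝ (Fin d))
    (p : EuclideanSpace ℝ (Fin d)) : ℝ :=
  (∑ k, ⟪fderiv ℝ N p (EuclideanSpace.basisFun (Fin d) ℝ k),
      EuclideanSpace.basisFun (Fin d) ℝ k⟫) - ⟪fderiv ℝ N p p, p⟫

lemma div_formula {m : ℕ} {N : EuclideanSpace ℝ (Fin (m+1)) → EuclideanSpace ℝ (Fin (m+1))}
    (hN : ContDiff ℝ (⊤ : ℕ∞) N)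
    (htang : ∀ p : EuclideanSpace ℝ (Fin (m+1)), ‖p‖ = 1 → ⟪N p, p⟫ = 0)
    (ψ : ContDiffBump (1:ℝ)) {x : EuclideanSpace ℝ (Fin (m+1))} (hx : x ≠ 0) :
    DifferentiableAt ℝ (fun y => ψ ⟪y,y⟫ • N ((Real.sqrt ⟪y,y⟫)⁻¹ • y)) x ∧
    ∑ k, ⟪fderiv ℝ (fun y => ψ ⟪y,y⟫ • N ((Real.sqrt ⟪y,y⟫)⁻¹ • y)) x
        (EuclideanSpace.basisFun (Fin (m+1)) ℝ k), EuclideanSpace.basisFun (Fin (m+1)) ℝ k⟫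
      = ψ ⟪x,x⟫ * ((Real.sqrt ⟪x,x⟫)⁻¹ * Tdiv N ((Real.sqrt ⟪x,x⟫)⁻¹ • x)) := by
  set q : ℝ := ⟪x, x⟫ with hq_def
  have hq0 : 0 < q := by
    rw [hq_def, real_inner_self_eq_norm_sq]
    exact pow_pos (norm_pos_iff.mpr hx) 2
  set r : ℝ := Real.sqrt q with hr_def
  have hr0 : 0 < r := Real.sqrt_pos.mpr hq0
  have hrx : ‖x‖ = r := by
    rw [hr_def, hq_def, real_inner_self_eq_norm_sq, Real.sqrt_sq (norm_nonneg x)]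
  set u : EuclideanSpace ℝ (Fin (m+1)) := r⁻¹ • x with hu_def
  have hu1 : ‖u‖ = 1 := by
    rw [hu_def, norm_smul, hrx, norm_inv, Real.norm_of_nonneg hr0.le,
      inv_mul_cancel₀ hr0.ne']
  have hxu : x = r • u := by rw [hu_def, smul_smul, mul_inv_cancel₀ hr0.ne', one_smul]
  -- derivative of y ↦ ⟪y,y⟫
  have hqd : HasFDerivAt (fun y : EuclideanSpace ℝ (Fin (m+1)) => ⟪y,y⟫)
      ((fderivInnerCLM ℝ (x, x)).comp ((ContinuousLinearMap.id ℝ _).prod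
        (ContinuousLinearMap.id ℝ _))) x :=
    (hasFDerivAt_id x).inner ℝ (hasFDerivAt_id x)
  set Dq := (fderivInnerCLM ℝ (x, x)).comp ((ContinuousLinearMap.id ℝ
      (EuclideanSpace ℝ (Fin (m+1)))).prod (ContinuousLinearMap.id ℝ _)) with hDq_def
  have hDq_app : ∀ v, Dq v = 2 * ⟪x, v⟫ := by
    intro v
    simp [hDq_def, fderivInnerCLM_apply, real_inner_comm v x]
    ring
  -- derivative of t ↦ (√t)⁻¹ at q
  set ms : ℝ := -(1 / (2 * r)) / r ^ 2 with hms_def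
  have hsd : HasDerivAt (fun t : ℝ => (Real.sqrt t)⁻¹) ms q :=
    (Real.hasDerivAt_sqrt hq0.ne').inv (by rwa [Real.sqrt_ne_zero' ])
  have hsx : HasFDerivAt (fun y : EuclideanSpace ℝ (Fin (m+1)) => (Real.sqrt ⟪y,y⟫)⁻¹)
      (ms • Dq) x := HasDerivAt.comp_hasFDerivAt (h₂ := fun t : ℝ => (Real.sqrt t)⁻¹)
      (f := fun y : EuclideanSpace ℝ (Fin (m+1)) => ⟪y,y⟫) x hsd hqd
  have hud : HasFDerivAt (fun y : EuclideanSpace ℝ (Fin (m+1)) => (Real.sqrt ⟪y,y⟫)⁻¹ • y)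
      ((r⁻¹ : ℝ) • ContinuousLinearMap.id ℝ _ + (ms • Dq).smulRight x) x := by
    have := hsx.smul (hasFDerivAt_id x)
    exact this
  set B := fderiv ℝ N u with hB_def
  have hNd : HasFDerivAt N B u := (hN.differentiable (by simp) u).hasFDerivAt
  have hNu : HasFDerivAt (fun y : EuclideanSpace ℝ (Fin (m+1)) =>
      N ((Real.sqrt ⟪y,y⟫)⁻¹ • y))
      (B.comp ((r⁻¹ : ℝ) • ContinuousLinearMap.id ℝ _ + (ms • Dq).smulRight x)) x :=
    hNd.comp x hud
  have hψd : HasDerivAt (fun t => ψ t) (deriv (fun t => ψ t) q) q :=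
    (((ψ.contDiff (n := (⊤ : ℕ∞))).differentiable (by simp)) q).hasDerivAt
  have hψx : HasFDerivAt (fun y : EuclideanSpace ℝ (Fin (m+1)) => ψ ⟪y,y⟫)
      ((deriv (fun t => ψ t) q) • Dq) x := HasDerivAt.comp_hasFDerivAt (h₂ := fun t => ψ t)
      (f := fun y : EuclideanSpace ℝ (Fin (m+1)) => ⟪y,y⟫) x hψd hqd
  have hZ : HasFDerivAt (fun y => ψ ⟪y,y⟫ • N ((Real.sqrt ⟪y,y⟫)⁻¹ • y))
      (ψ q • (B.comp ((r⁻¹ : ℝ) • ContinuousLinearMap.id ℝ _ + (ms • Dq).smulRight x))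
        + ((deriv (fun t => ψ t) q) • Dq).smulRight (N u)) x := hψx.smul hNu
  refine ⟨hZ.differentiableAt, ?_⟩
  rw [hZ.fderiv]
  set L := ψ q • (B.comp ((r⁻¹ : ℝ) • ContinuousLinearMap.id ℝ
      (EuclideanSpace ℝ (Fin (m+1))) + (ms • Dq).smulRight x))
      + ((deriv (fun t => ψ t) q) • Dq).smulRight (N u) with hL_def
  set bb := EuclideanSpace.basisFun (Fin (m+1)) ℝ with hbb_def
  set dψ := deriv (fun t => ψ t) q with hdψ_def
  have hbk : ∀ k, ⟪L (bb k), bb k⟫ = ψ q * r⁻¹ * ⟪B (bb k), bb k⟫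
      + (ψ q * ms * 2) * (⟪x, bb k⟫ * ⟪bb k, B x⟫)
      + (dψ * 2) * (⟪x, bb k⟫ * ⟪bb k, N u⟫) := by
    intro k
    rw [hL_def]
    simp only [ContinuousLinearMap.add_apply, ContinuousLinearMap.smul_apply,
      ContinuousLinearMap.coe_comp', Function.comp_apply, ContinuousLinearMap.smulRight_apply,
      ContinuousLinearMap.coe_id', id_eq, map_add, _root_.map_smul, hDq_app]
    simp only [inner_add_left, real_inner_smul_left, smul_eq_mul]
    rw [real_inner_comm (B x) (bb k), real_inner_comm (N u) (bb k)]
    ring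
  have hsum1 : ∑ k, ⟪x, bb k⟫ * ⟪bb k, B x⟫ = ⟪x, B x⟫ := by
    rw [hbb_def]; exact (EuclideanSpace.basisFun (Fin (m+1)) ℝ).sum_inner_mul_inner x (B x)
  have hsum2 : ∑ k, ⟪x, bb k⟫ * ⟪bb k, N u⟫ = ⟪x, N u⟫ := by
    rw [hbb_def]; exact (EuclideanSpace.basisFun (Fin (m+1)) ℝ).sum_inner_mul_inner x (N u)
  have hxNu : ⟪x, N u⟫ = 0 := by
    rw [hxu, real_inner_smul_left, real_inner_comm, htang u hu1]
    ring
  have hxBx : ⟪x, B x⟫ = r ^ 2 * ⟪B u, u⟫ := by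
    rw [hxu, _root_.map_smul, real_inner_smul_left, real_inner_smul_right,
      real_inner_comm u (B u)]
    ring
  calc ∑ k, ⟪L (bb k), bb k⟫
      = ∑ k, (ψ q * r⁻¹ * ⟪B (bb k), bb k⟫
        + (ψ q * ms * 2) * (⟪x, bb k⟫ * ⟪bb k, B x⟫)
        + (dψ * 2) * (⟪x, bb k⟫ * ⟪bb k, N u⟫)) := Finset.sum_congr rfl fun k _ => hbk k
    _ = ψ q * r⁻¹ * (∑ k, ⟪B (bb k), bb k⟫) + (ψ q * ms * 2) * ⟪x, B x⟫
        + (dψ * 2) * ⟪x, N u⟫ := by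
      rw [Finset.sum_add_distrib, Finset.sum_add_distrib, ← Finset.mul_sum, ← Finset.mul_sum,
        ← Finset.mul_sum, hsum1, hsum2]
    _ = ψ q * (r⁻¹ * Tdiv N u) := by
      rw [hxNu, hxBx, Tdiv, ← hB_def, ← hbb_def, hms_def]
      have h1 : ⟪B u, u⟫ = ⟪fderiv ℝ N u u, u⟫ := by rw [hB_def]
      rw [← h1]
      field_simp
      ring
lemma no_pos_div {m : ℕ} {N : EuclideanSpace ℝ (Fin (m+1)) → EuclideanSpace ℝ (Fin (m+1))}
    (hN : ContDiff ℝ (⊤ : ℕ∞) N)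
    (htang : ∀ p : EuclideanSpace ℝ (Fin (m+1)), ‖p‖ = 1 → ⟪N p, p⟫ = 0)
    (hpos : ∀ p : EuclideanSpace ℝ (Fin (m+1)), ‖p‖ = 1 → 0 < Tdiv N p) : False := by
  classical
  set ψ : ContDiffBump (1:ℝ) := ⟨1/4, 1/2, by norm_num, by norm_num⟩ with hψ_def
  set Z : EuclideanSpace ℝ (Fin (m+1)) → EuclideanSpace ℝ (Fin (m+1)) :=
    fun y => ψ ⟪y,y⟫ • N ((Real.sqrt ⟪y,y⟫)⁻¹ • y) with hZ_def
  set H : EuclideanSpace ℝ (Fin (m+1)) → ℝ :=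
    fun x => ψ ⟪x,x⟫ * ((Real.sqrt ⟪x,x⟫)⁻¹ * Tdiv N ((Real.sqrt ⟪x,x⟫)⁻¹ • x)) with hH_def
  set bb := EuclideanSpace.basisFun (Fin (m+1)) ℝ with hbb_def
  have hψlow : ∀ t : ℝ, t ≤ 1/2 → ψ t = 0 := by
    intro t ht
    refine ψ.zero_of_le_dist ?_
    have : ψ.rOut = 1/2 := rfl
    rw [this, Real.dist_eq]
    rw [abs_sub_comm, abs_of_nonneg (by linarith)]
    linarith
  have hψhigh : ∀ t : ℝ, 3/2 ≤ t → ψ t = 0 := by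
    intro t ht
    refine ψ.zero_of_le_dist ?_
    have : ψ.rOut = 1/2 := rfl
    rw [this, Real.dist_eq, abs_of_nonneg (by linarith)]
    linarith
  have hqcont : Continuous (fun y : EuclideanSpace ℝ (Fin (m+1)) => ⟪y,y⟫) :=
    continuous_id.inner continuous_id
  have hUopen : IsOpen {y : EuclideanSpace ℝ (Fin (m+1)) | ⟪y,y⟫ < 1/2} :=
    isOpen_lt hqcont continuous_const
  have hZnear : ∀ x : EuclideanSpace ℝ (Fin (m+1)), ⟪x,x⟫ < 1/2 →
      Z =ᶠ[nhds x] (fun _ => (0 : EuclideanSpace ℝ (Fin (m+1)))) := by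
    intro x hx
    filter_upwards [hUopen.mem_nhds hx] with y hy
    rw [hZ_def]
    simp only
    rw [hψlow _ (le_of_lt hy), zero_smul]
  have hq0 : ∀ x : EuclideanSpace ℝ (Fin (m+1)), x ≠ 0 → 0 < ⟪x,x⟫ := by
    intro x hx
    rw [real_inner_self_eq_norm_sq]
    exact pow_pos (norm_pos_iff.mpr hx) 2
  have hdiffZ : Differentiable ℝ Z := by
    intro x
    by_cases hx : ⟪x,x⟫ < 1/2
    · rw [(hZnear x hx).differentiableAt_iff]
      exact differentiableAt_const _
    · have hx0 : x ≠ 0 := by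
        intro h
        apply hx
        rw [h, inner_zero_left]
        norm_num
      exact (div_formula hN htang ψ hx0).1
  have hdivZ : ∀ x, (∑ k, ⟪fderiv ℝ Z x (bb k), bb k⟫) = H x := by
    intro x
    by_cases hx : ⟪x,x⟫ < 1/2
    · have h1 : fderiv ℝ Z x = 0 := by
        rw [(hZnear x hx).fderiv_eq]
        exact fderiv_const_apply _
      rw [h1, hH_def]
      simp only [ContinuousLinearMap.zero_apply, inner_zero_left, Finset.sum_const_zero]
      rw [hψlow _ (le_of_lt hx), zero_mul]
    · have hx0 : x ≠ 0 := by
        intro h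
        apply hx
        rw [h, inner_zero_left]
        norm_num
      exact (div_formula hN htang ψ hx0).2
  have hTcont : Continuous (Tdiv N) := by
    have hfd : Continuous (fun p : EuclideanSpace ℝ (Fin (m+1)) => fderiv ℝ N p) :=
      hN.continuous_fderiv (by simp)
    unfold Tdiv
    apply Continuous.sub
    · exact continuous_finset_sum _ fun k _ =>
        ((hfd.clm_apply continuous_const).inner continuous_const)
    · exact (hfd.clm_apply continuous_id).inner continuous_id
  have hHcont : Continuous H := by
    rw [continuous_iff_continuousAt]
    intro x
    by_cases hx : ⟪x,x⟫ < 1/2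
    · have hHnear : (fun _ => (0:ℝ)) =ᶠ[nhds x] H := by
        filter_upwards [hUopen.mem_nhds hx] with y hy
        rw [hH_def]
        simp only
        rw [hψlow _ (le_of_lt hy), zero_mul]
      exact continuousAt_const.congr hHnear
    · have hx0 : x ≠ 0 := by
        intro h; apply hx; rw [h, inner_zero_left]; norm_num
      have hr : Real.sqrt ⟪x,x⟫ ≠ 0 := by
        rw [Real.sqrt_ne_zero']
        exact hq0 x hx0
      have c1 : ContinuousAt (fun y : EuclideanSpace ℝ (Fin (m+1)) =>
          (Real.sqrt ⟪y,y⟫)⁻¹) x :=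
        ((Real.continuous_sqrt.comp hqcont).continuousAt).inv₀ hr
      have c2 : ContinuousAt (fun y : EuclideanSpace ℝ (Fin (m+1)) =>
          (Real.sqrt ⟪y,y⟫)⁻¹ • y) x := c1.smul continuousAt_id
      exact ((ψ.continuous.comp hqcont).continuousAt).mul
        (c1.mul ((hTcont.continuousAt).comp c2))
  have hHnonneg : ∀ x, 0 ≤ H x := by
    intro x
    by_cases hx0 : x = 0
    · rw [hH_def, hx0]
      simp only [inner_zero_left]
      rw [hψlow 0 (by norm_num)]
      ring_nf
      norm_num
    · have hq := hq0 x hx0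
      have hr : 0 < Real.sqrt ⟪x,x⟫ := Real.sqrt_pos.mpr hq
      have hu1 : ‖(Real.sqrt ⟪x,x⟫)⁻¹ • x‖ = 1 := by
        rw [norm_smul, norm_inv, Real.norm_of_nonneg hr.le]
        rw [show ‖x‖ = Real.sqrt ⟪x,x⟫ by
          rw [real_inner_self_eq_norm_sq, Real.sqrt_sq (norm_nonneg x)]]
        exact inv_mul_cancel₀ hr.ne'
      exact mul_nonneg ψ.nonneg
        (mul_nonneg (inv_nonneg.mpr hr.le) (hpos _ hu1).le)
  have hHpos : 0 < H (bb 0) := by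
    have hb1 : ‖bb 0‖ = 1 := (bb.orthonormal).1 0
    have hq1 : ⟪bb 0, bb 0⟫ = (1:ℝ) := by
      rw [real_inner_self_eq_norm_sq, hb1]; norm_num
    rw [hH_def]
    simp only [hq1]
    rw [Real.sqrt_one, inv_one, one_smul]
    rw [ψ.one_of_mem_closedBall (by
      simp only [Metric.mem_closedBall, dist_self]
      norm_num [hψ_def] )]
    simpa using hpos _ hb1
  -- Divergence theorem on a box in pi space
  set eqv := EuclideanSpace.equiv (Fin (m+1)) ℝ with heqv_def
  set a : Fin (m+1) → ℝ := fun _ => (-2 : ℝ) with ha_def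
  set b : Fin (m+1) → ℝ := fun _ => (2 : ℝ) with hb_def
  have hle : a ≤ b := fun i => by norm_num [ha_def, hb_def]
  set f : Fin (m+1) → (Fin (m+1) → ℝ) → ℝ := fun i y => eqv (Z (eqv.symm y)) i with hf_def
  set f' : Fin (m+1) → (Fin (m+1) → ℝ) → (Fin (m+1) → ℝ) →L[ℝ] ℝ := fun i y =>
    ((ContinuousLinearMap.proj i).comp ((eqv : EuclideanSpace ℝ (Fin (m+1)) →L[ℝ] (Fin (m+1) → ℝ)))).comp
      ((fderiv ℝ Z (eqv.symm y)).comp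
        ((eqv.symm : (Fin (m+1) → ℝ) →L[ℝ] EuclideanSpace ℝ (Fin (m+1))))) with hf'_def
  have hfd : ∀ (y : Fin (m+1) → ℝ) (i : Fin (m+1)), HasFDerivAt (f i) (f' i y) y := by
    intro y i
    have h1 : HasFDerivAt (fun y => Z (eqv.symm y))
        ((fderiv ℝ Z (eqv.symm y)).comp
          ((eqv.symm : (Fin (m+1) → ℝ) →L[ℝ] EuclideanSpace ℝ (Fin (m+1))))) y :=
      ((hdiffZ (eqv.symm y)).hasFDerivAt).comp y eqv.symm.hasFDerivAt
    exact (((ContinuousLinearMap.proj i).comp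
      ((eqv : EuclideanSpace ℝ (Fin (m+1)) →L[ℝ] (Fin (m+1) → ℝ)))).hasFDerivAt).comp y h1
  have hsingle : ∀ i : Fin (m+1), eqv.symm (Pi.single i 1) = bb i := by
    intro i
    rw [hbb_def, EuclideanSpace.basisFun_apply]
    rfl
  have hcomp : ∀ w : EuclideanSpace ℝ (Fin (m+1)), ∀ i, eqv w i = ⟪w, bb i⟫ := by
    intro w i
    rw [hbb_def, EuclideanSpace.basisFun_apply, EuclideanSpace.inner_single_right]
    simp only [map_one, one_mul, conj_trivial]
    rfl
  have hintegrand : (fun y : Fin (m+1) → ℝ => ∑ i, f' i y (Pi.single i 1))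
      = fun y => H (eqv.symm y) := by
    funext y
    rw [← hdivZ (eqv.symm y)]
    refine Finset.sum_congr rfl fun i _ => ?_
    rw [hf'_def]
    simp only [ContinuousLinearMap.comp_apply, ContinuousLinearEquiv.coe_coe,
      ContinuousLinearMap.proj_apply]
    rw [hsingle i]
    exact hcomp _ i
  have hZcont : Continuous Z := hdiffZ.continuous
  have hZbig : ∀ x : EuclideanSpace ℝ (Fin (m+1)), (3:ℝ)/2 ≤ ⟪x,x⟫ → Z x = 0 := by
    intro x hx
    rw [hZ_def]
    simp only
    rw [hψhigh _ hx, zero_smul]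
  have hdivthm := integral_divergence_of_hasFDerivAt_off_countable' a b hle f f'
    ∅ Set.countable_empty
    (fun i => ((continuous_apply i).comp
      (eqv.continuous.comp (hZcont.comp eqv.symm.continuous))).continuousOn)
    (fun x _ i => hfd x i)
    (by
      rw [hintegrand]
      exact ((hHcont.comp eqv.symm.continuous).continuousOn).integrableOn_compact isCompact_Icc)
  have hfaceval : ∀ (i : Fin (m+1)) (c : ℝ), (2:ℝ) ≤ |c| → ∀ x : Fin m → ℝ,
      f i (i.insertNth c x) = 0 := by
    intro i c hc x
    set y' : Fin (m+1) → ℝ := i.insertNth c x with hy'_def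
    rw [hf_def]
    simp only
    have hZ0 : Z (eqv.symm y') = 0 := by
      apply hZbig
      have hinner : ⟪eqv.symm y', eqv.symm y'⟫ = ∑ j, (y' j) * (y' j) := by
        rw [PiLp.inner_apply]
        rfl
      rw [hinner]
      have hterm : (y' i) * (y' i) = c * c := by
        rw [hy'_def, Fin.insertNth_apply_same]
      have hge : c * c ≤ ∑ j, (y' j) * (y' j) := by
        rw [← hterm]
        exact Finset.single_le_sum (f := fun j => (y' j) * (y' j))
          (fun j _ => mul_self_nonneg _) (Finset.mem_univ i)
      nlinarith [abs_nonneg c, sq_abs c]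
    rw [hZ0]
    simp
  have hzero : ∫ y in Set.Icc a b, H (eqv.symm y) = 0 := by
    rw [← hintegrand, hdivthm]
    apply Finset.sum_eq_zero
    intro i _
    have h1 : (fun x : Fin m → ℝ => f i (i.insertNth (b i) x)) = fun _ => 0 := by
      funext x
      exact hfaceval i (b i) (by rw [hb_def]; norm_num) x
    have h2 : (fun x : Fin m → ℝ => f i (i.insertNth (a i) x)) = fun _ => 0 := by
      funext x
      exact hfaceval i (a i) (by rw [ha_def]; norm_num) x
    rw [h1, h2]
    simp
  have hy0mem : (Pi.single 0 1 : Fin (m+1) → ℝ) ∈ interior (Set.Icc a b) := by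
    rw [← Set.pi_univ_Icc, interior_pi_set Set.finite_univ]
    intro j _
    simp only [interior_Icc, Set.mem_Ioo, Pi.single_apply, ha_def, hb_def]
    split <;> norm_num
  have hgpos : 0 < H (eqv.symm (Pi.single 0 1)) := by
    rw [hsingle 0]
    exact hHpos
  have hWopen : IsOpen ({y : Fin (m+1) → ℝ | 0 < H (eqv.symm y)} ∩ interior (Set.Icc a b)) :=
    (isOpen_lt continuous_const (hHcont.comp eqv.symm.continuous)).inter isOpen_interior
  have hWne : ({y : Fin (m+1) → ℝ | 0 < H (eqv.symm y)} ∩ interior (Set.Icc a b)).Nonempty :=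
    ⟨Pi.single 0 1, hgpos, hy0mem⟩
  have hWsub : ({y : Fin (m+1) → ℝ | 0 < H (eqv.symm y)} ∩ interior (Set.Icc a b))
      ⊆ Function.support (fun y => H (eqv.symm y)) ∩ Set.Icc a b := by
    rintro y ⟨h1, h2⟩
    exact ⟨ne_of_gt h1, interior_subset h2⟩
  have hmeas : 0 < volume (Function.support (fun y => H (eqv.symm y)) ∩ Set.Icc a b) :=
    lt_of_lt_of_le (hWopen.measure_pos volume hWne) (measure_mono hWsub)
  have hpos_int : 0 < ∫ y in Set.Icc a b, H (eqv.symm y) := by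
    rw [setIntegral_pos_iff_support_of_nonneg_ae
      (Filter.Eventually.of_forall (fun y => hHnonneg _) : _ )
      (((hHcont.comp eqv.symm.continuous).continuousOn).integrableOn_compact isCompact_Icc)]
    exact hmeas
  rw [hzero] at hpos_int
  exact lt_irrefl 0 hpos_int

/-- There is no smooth, transversely orientable codimension-one foliation of the unit sphere
`S^{n+1} ⊂ ℝ^{n+2}` whose leaves are complete and have constant scalar curvature `> 1`.

A transversely orientable codimension-one foliation of the sphere is encoded by a smooth unit
field `N` tangent to the sphere whose orthogonal distribution (within the sphere) is
integrable, i.e. the shape operator `v ↦ -D̄_v N` of the leaves is symmetric on it; `e p` is a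
pointwise orthonormal frame of the leaf-tangent space at `p`.  (Leaves of a foliation of the
compact sphere are automatically complete.)  By the Gauss equation the (normalized) scalar
curvature of the leaf through `p` is `R p = 1 + (S₁² - |A|²)/(n(n-1))` with
`S₁ = -∑ᵢ ⟨D_{eᵢ}N, eᵢ⟩` and `|A|² = ∑_{i,j} ⟨D_{eᵢ}N, eⱼ⟩²`; that each leaf has constant
scalar curvature is expressed by the vanishing of the derivative of `R` in all leaf-tangent
directions. -/
theorem stmt_18 {n : ℕ} (hn : 2 ≤ n) :
    ¬ ∃ (N : EuclideanSpace ℝ (Fin (n + 2)) → EuclideanSpace ℝ (Fin (n + 2)))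
        (e : EuclideanSpace ℝ (Fin (n + 2)) → Fin n → EuclideanSpace ℝ (Fin (n + 2)))
        (R : EuclideanSpace ℝ (Fin (n + 2)) → ℝ),
      ContDiff ℝ (⊤ : ℕ∞) N ∧ ContDiff ℝ (⊤ : ℕ∞) R ∧
      (∀ p ∈ Metric.sphere (0 : EuclideanSpace ℝ (Fin (n + 2))) 1,
        ‖N p‖ = 1 ∧ (inner ℝ (N p) p : ℝ) = 0) ∧
      (∀ p ∈ Metric.sphere (0 : EuclideanSpace ℝ (Fin (n + 2))) 1,
        Orthonormal ℝ (e p) ∧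
        ∀ i, (inner ℝ (e p i) p : ℝ) = 0 ∧ (inner ℝ (e p i) (N p) : ℝ) = 0) ∧
      (∀ p ∈ Metric.sphere (0 : EuclideanSpace ℝ (Fin (n + 2))) 1,
        ∀ v w : EuclideanSpace ℝ (Fin (n + 2)),
          (inner ℝ v p : ℝ) = 0 → (inner ℝ v (N p) : ℝ) = 0 →
          (inner ℝ w p : ℝ) = 0 → (inner ℝ w (N p) : ℝ) = 0 →
          (inner ℝ (fderiv ℝ N p v) w : ℝ) = (inner ℝ (fderiv ℝ N p w) v : ℝ)) ∧
      (∀ p ∈ Metric.sphere (0 : EuclideanSpace ℝ (Fin (n + 2))) 1,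
        R p = 1 + ((∑ i, (inner ℝ (fderiv ℝ N p (e p i)) (e p i) : ℝ)) ^ 2
            - ∑ i, ∑ j, (inner ℝ (fderiv ℝ N p (e p i)) (e p j) : ℝ) ^ 2)
          / (n * (n - 1) : ℕ) ∧
        1 < R p) ∧
      (∀ p ∈ Metric.sphere (0 : EuclideanSpace ℝ (Fin (n + 2))) 1,
        ∀ v : EuclideanSpace ℝ (Fin (n + 2)),
          (inner ℝ v p : ℝ) = 0 → (inner ℝ v (N p) : ℝ) = 0 → fderiv ℝ R p v = 0) := by
  rintro ⟨N, e, R, hN, hR, hunit, hframe, hsym, hgauss, hconst⟩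
  have hsph : ∀ p : EuclideanSpace ℝ (Fin (n+2)), ‖p‖ = 1 →
      p ∈ Metric.sphere (0 : EuclideanSpace ℝ (Fin (n+2))) 1 := by
    intro p hp; rwa [mem_sphere_zero_iff_norm]
  have htang : ∀ p : EuclideanSpace ℝ (Fin (n+2)), ‖p‖ = 1 → ⟪N p, p⟫ = 0 :=
    fun p hp => (hunit p (hsph p hp)).2
  have hNnorm : ∀ p : EuclideanSpace ℝ (Fin (n+2)), ‖p‖ = 1 → ‖N p‖ = 1 :=
    fun p hp => (hunit p (hsph p hp)).1
  have hTS : ∀ p : EuclideanSpace ℝ (Fin (n+2)), ‖p‖ = 1 →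
      Tdiv N p = ∑ i, ⟪fderiv ℝ N p (e p i), e p i⟫ := by
    intro p hp
    have hfr := hframe p (hsph p hp)
    have hNN : ⟪fderiv ℝ N p (N p), N p⟫ = 0 :=
      inner_fderiv_self_zero hN hp hNnorm (hNnorm p hp) (htang p hp)
    have hsplit := trace_split hp (hNnorm p hp) (htang p hp) hfr.1
      (fun i => (hfr.2 i).1) (fun i => (hfr.2 i).2) (fderiv ℝ N p)
    unfold Tdiv
    rw [hsplit, hNN]
    ring
  have hne : ∀ p : EuclideanSpace ℝ (Fin (n+2)), ‖p‖ = 1 → Tdiv N p ≠ 0 := by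
    intro p hp h0
    obtain ⟨hReq, hRgt⟩ := hgauss p (hsph p hp)
    have hc : (0:ℝ) < ((n * (n - 1) : ℕ) : ℝ) := by
      have : 1 ≤ n * (n - 1) := by
        have h1 : 1 ≤ n - 1 := by omega
        calc 1 = 1 * 1 := by ring
        _ ≤ n * (n-1) := Nat.mul_le_mul (by omega) h1
      exact_mod_cast Nat.lt_of_lt_of_le Nat.zero_lt_one this
    have h1 : 0 < ((∑ i, ⟪fderiv ℝ N p (e p i), e p i⟫) ^ 2
        - ∑ i, ∑ j, (⟪fderiv ℝ N p (e p i), e p j⟫ : ℝ) ^ 2) / ((n * (n - 1) : ℕ) : ℝ) := by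
      rw [hReq] at hRgt
      linarith
    have h2 : 0 < (∑ i, ⟪fderiv ℝ N p (e p i), e p i⟫) ^ 2
        - ∑ i, ∑ j, (⟪fderiv ℝ N p (e p i), e p j⟫ : ℝ) ^ 2 :=
      (div_pos_iff.mp h1).resolve_right (fun h => absurd h.2 (by linarith)) |>.1
    have hA2 : 0 ≤ ∑ i, ∑ j, (⟪fderiv ℝ N p (e p i), e p j⟫ : ℝ) ^ 2 :=
      Finset.sum_nonneg fun i _ => Finset.sum_nonneg fun j _ => sq_nonneg _
    have hS0 : (∑ i, ⟪fderiv ℝ N p (e p i), e p i⟫) = 0 := by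
      rw [← hTS p hp]; exact h0
    rw [hS0] at h2
    nlinarith
  have hTcont : Continuous (Tdiv N) := by
    have hfd : Continuous (fun p : EuclideanSpace ℝ (Fin (n+2)) => fderiv ℝ N p) :=
      hN.continuous_fderiv (by simp)
    unfold Tdiv
    apply Continuous.sub
    · exact continuous_finset_sum _ fun k _ =>
        ((hfd.clm_apply continuous_const).inner continuous_const)
    · exact (hfd.clm_apply continuous_id).inner continuous_id
  have hconn : IsPreconnected (Metric.sphere (0 : EuclideanSpace ℝ (Fin (n+2))) 1) := by
    apply isPreconnected_sphere
    rw [← Module.finrank_eq_rank]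
    have : Module.finrank ℝ (EuclideanSpace ℝ (Fin (n+2))) = n + 2 :=
      finrank_euclideanSpace_fin
    rw [this]
    exact_mod_cast by omega
  set p₀ : EuclideanSpace ℝ (Fin (n+2)) := EuclideanSpace.single 0 1 with hp₀_def
  have hp₀ : ‖p₀‖ = 1 := by
    rw [hp₀_def, EuclideanSpace.norm_single]
    norm_num
  have hdichot : (∀ p : EuclideanSpace ℝ (Fin (n+2)), ‖p‖ = 1 → 0 < Tdiv N p)
      ∨ (∀ p : EuclideanSpace ℝ (Fin (n+2)), ‖p‖ = 1 → Tdiv N p < 0) := by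
    rcases (hne p₀ hp₀).lt_or_gt with hneg | hposs
    · right
      intro p hp
      rcases (hne p hp).lt_or_gt with h | h
      · exact h
      · exfalso
        have hIV := hconn.intermediate_value (hsph p₀ hp₀) (hsph p hp)
          (hTcont.continuousOn)
        obtain ⟨z, hz, hz0⟩ := hIV (Set.mem_Icc.mpr ⟨hneg.le, h.le⟩)
        exact hne z (mem_sphere_zero_iff_norm.mp hz) hz0
    · left
      intro p hp
      rcases (hne p hp).lt_or_gt with h | h
      · exfalso
        have hIV := hconn.intermediate_value (hsph p hp) (hsph p₀ hp₀)
          (hTcont.continuousOn)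
        obtain ⟨z, hz, hz0⟩ := hIV (Set.mem_Icc.mpr ⟨h.le, hposs.le⟩)
        exact hne z (mem_sphere_zero_iff_norm.mp hz) hz0
      · exact h
  rcases hdichot with hpos | hneg
  · exact no_pos_div (m := n+1) hN htang hpos
  · have hN' : ContDiff ℝ (⊤ : ℕ∞) (fun x => -N x) := hN.neg
    have htang' : ∀ p : EuclideanSpace ℝ (Fin (n+2)), ‖p‖ = 1 → ⟪-N p, p⟫ = 0 := by
      intro p hp
      rw [inner_neg_left, htang p hp, neg_zero]
    have hTneg : ∀ p : EuclideanSpace ℝ (Fin (n+2)),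
        Tdiv (fun x => -N x) p = - Tdiv N p := by
      intro p
      unfold Tdiv
      rw [fderiv_fun_neg]
      simp only [ContinuousLinearMap.neg_apply, inner_neg_left, Finset.sum_neg_distrib]
      ring
    exact no_pos_div (m := n+1) hN' htang' (fun p hp => by
      rw [hTneg p]
      exact neg_pos.mpr (hneg p hp))
end
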